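/- (Relation 4) Define X : V → R by X(k) = e^{e_n − e_{n+1} − 2h(k)} for all k ∈ V. Then for every v ∈ V one has M_v · M_{v̄} = X as functions V → R (pointwise product); in particular M_v · M_{v̄} = M_w · M_{w̄} for all v, w ∈ V. -/

import Mathlib

noncomputable section

/-- Standard basis vector `e_k` of `ℤ^{n+1}` (1-indexed), with `e 0 = 0`. -/
def ee (n k : ℕ) : Fin (n+1) → ℤ := fun t => if (t : ℕ) + 1 = k then 1 else 0

/-- The function `h : V → ℤ^{n+1}`. -/
def hh (n j : ℕ) : Fin (n+1) → ℤ :=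
  if j ≤ n+2 then ee n (j-1) - ee n (n+1) else ee n n - ee n (2*n+2-j)

/-- The Laurent polynomial ring `R = ℤ[y₁^{±1},…,y_{n+1}^{±1}]`. -/
abbrev Rg (n : ℕ) : Type := AddMonoidAlgebra ℤ (Fin (n+1) → ℤ)

/-- The monomial `e^w`. -/
def ex (n : ℕ) (w : Fin (n+1) → ℤ) : Rg n := AddMonoidAlgebra.single w 1

/-- `ī = 2n+3-i`. -/
def bar (n i : ℕ) : ℕ := 2*n+3 - i

/-- Membership in the vertex set `V = {1,…,2n+2}`. -/
def memV (n i : ℕ) : Prop := 1 ≤ i ∧ i ≤ 2*n+2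

/-- The axial function `α(i,j) = h(j) - h(i)`. -/
def axl (n i j : ℕ) : Fin (n+1) → ℤ := hh n j - hh n i

/-- The K-class `M_v`. -/
def Mv (n v : ℕ) (l : ℕ) : Rg n :=
  if l = v then 1
  else if l = bar n v then ex n (ee n n - ee n (n+1) - (2:ℤ) • hh n (bar n v))
  else ex n (hh n v - hh n l)

/-- The pointwise inverse `M_v⁻¹`. -/
def MvInv (n v : ℕ) (l : ℕ) : Rg n :=
  if l = v then 1
  else if l = bar n v then ex n (-(ee n n - ee n (n+1) - (2:ℤ) • hh n (bar n v)))
  else ex n (hh n l - hh n v)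

/-- A subset `P ⊆ V` is admissible if it is nonempty and contains no pair `{i, ī}`. -/
def admissible (n : ℕ) (P : Finset ℕ) : Prop :=
  P.Nonempty ∧ (∀ i ∈ P, memV n i) ∧ (∀ i ∈ P, bar n i ∉ P)

/-- The vertex set as a finset. -/
def Vfin (n : ℕ) : Finset ℕ := Finset.Icc 1 (2*n+2)

/-- The Thom class `Δ_P`. -/
def Dl (n : ℕ) (P : Finset ℕ) (l : ℕ) : Rg n :=
  if l ∈ P then
    ∏ k ∈ (Vfin n).filter (fun k => k ∉ P ∧ k ≠ bar n l), (1 - ex n (axl n l k))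
  else 0

/-- `φ : V → R` is a K-class if `1 - e^{α(i,j)}` divides `φ(i) - φ(j)` for every edge `(i,j)`. -/
def isKClass (n : ℕ) (f : ℕ → Rg n) : Prop :=
  ∀ i j : ℕ, memV n i → memV n j → j ≠ i → j ≠ bar n i →
    (1 - ex n (axl n i j)) ∣ (f i - f j)

/-!
Since `h(v) + h(v̄) = e_n - e_{n+1}` for every `v`, the special value `M_v(v̄)` is just
`e^{h(v) - h(v̄)}`, and `M_v(v) = 1 = e^{h(v) - h(v)}`; so `M_v(l) = e^{h(v) - h(l)}` for all `l`.
Hence `M_v(k) M_{v̄}(k) = e^{h(v) + h(v̄) - 2h(k)} = e^{e_n - e_{n+1} - 2h(k)}`.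
-/

lemma ex_zero (n : ℕ) : ex n 0 = 1 := rfl

lemma ex_add (n : ℕ) (a b : Fin (n+1) → ℤ) : ex n (a + b) = ex n a * ex n b := by
  simp [ex, AddMonoidAlgebra.single_mul_single]

/-- Outside `V` this survives through truncated subtraction and `e_0 = 0`. -/
lemma hh_add_hh_bar (n v : ℕ) : hh n v + hh n (bar n v) = ee n n - ee n (n+1) := by
  funext t
  have ht := t.isLt
  unfold hh bar
  split_ifs <;> simp only [ee, Pi.add_apply, Pi.sub_apply] <;> split_ifs <;> omega

lemma Mv_eq_ex (n v l : ℕ) : Mv n v l = ex n (hh n v - hh n l) := by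
  unfold Mv
  split_ifs with hlv hlb
  · rw [hlv, sub_self, ex_zero]
  · rw [hlb, ← hh_add_hh_bar n v]
    congr 1
    module
  · rfl

lemma Mv_mul_Mv_bar (n v k : ℕ) :
    Mv n v k * Mv n (bar n v) k = ex n (ee n n - ee n (n+1) - (2:ℤ) • hh n k) := by
  rw [Mv_eq_ex, Mv_eq_ex, ← ex_add, ← hh_add_hh_bar n v]
  congr 1
  module

theorem relation4_general (n : ℕ) :
    (∀ v, memV n v → ∀ k, memV n k →
       Mv n v k * Mv n (bar n v) k = ex n (ee n n - ee n (n+1) - (2:ℤ) • hh n k)) ∧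
    (∀ v w, memV n v → memV n w → ∀ k, memV n k →
       Mv n v k * Mv n (bar n v) k = Mv n w k * Mv n (bar n w) k) :=
  ⟨fun v _ k _ => Mv_mul_Mv_bar n v k,
   fun v w _ _ k _ => by rw [Mv_mul_Mv_bar, Mv_mul_Mv_bar]⟩

/-- Relation 4: with `X(k) = e^{e_n - e_{n+1} - 2h(k)}`, one has
`M_v · M_{v̄} = X` as functions `V → R` for every `v ∈ V`; in particular
`M_v · M_{v̄} = M_w · M_{w̄}` for all `v, w ∈ V`. -/
theorem relation4 (n : ℕ) (hn : 1 ≤ n) :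
    (∀ v, memV n v → ∀ k, memV n k →
       Mv n v k * Mv n (bar n v) k = ex n (ee n n - ee n (n+1) - (2:ℤ) • hh n k)) ∧
    (∀ v w, memV n v → memV n w → ∀ k, memV n k →
       Mv n v k * Mv n (bar n v) k = Mv n w k * Mv n (bar n w) k) :=
  relation4_general n
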